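/- arXiv:1408.1649 — 3 statements merged into one kernel-verified Lean document; each statement's English description precedes it below -/
import Mathlib

section
/- If G is a finite abelian group and N is a subgroup of G, then the minimal faithful permutation degree of G/N is at most that of G. -/
/-- The minimal faithful permutation degree of a group: the least `n` such that
the group embeds into `Equiv.Perm (Fin n)`. -/
noncomputable def minFaithfulDegree (G : Type*) [Group G] : ℕ :=
  sInf {n : ℕ | ∃ f : G →* Equiv.Perm (Fin n), Function.Injective f}

/-- Every quotient of a finite commutative group embeds into the group. -/
lemma exists_injective_quotient_to_self (G : Type*) [CommGroup G] [Finite G]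
    (N : Subgroup G) : ∃ ι : G ⧸ N →* G, Function.Injective ι := by
  have iG : NeZero (((Monoid.exponent G : ℕ)) : ℂ) :=
    ⟨by exact_mod_cast Nat.cast_ne_zero.mpr (Monoid.exponent_ne_zero_of_finite)⟩
  have iQ : NeZero (((Monoid.exponent (G ⧸ N) : ℕ)) : ℂ) :=
    ⟨by exact_mod_cast Nat.cast_ne_zero.mpr (Monoid.exponent_ne_zero_of_finite)⟩
  obtain ⟨eG⟩ := CommGroup.monoidHom_mulEquiv_of_hasEnoughRootsOfUnity G ℂ
  obtain ⟨eQ⟩ := CommGroup.monoidHom_mulEquiv_of_hasEnoughRootsOfUnity (G ⧸ N) ℂ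
  -- dual map: (G ⧸ N →* ℂˣ) →* (G →* ℂˣ), precomposition with the quotient map
  let d : (G ⧸ N →* ℂˣ) →* (G →* ℂˣ) :=
    { toFun := fun φ => φ.comp (QuotientGroup.mk' N)
      map_one' := by ext; simp
      map_mul' := fun φ ψ => by ext; simp }
  have hd : Function.Injective d := by
    intro φ ψ h
    refine MonoidHom.ext fun x => ?_
    obtain ⟨g, rfl⟩ := QuotientGroup.mk'_surjective N x
    exact DFunLike.congr_fun h g
  exact ⟨(eG.toMonoidHom.comp d).comp eQ.symm.toMonoidHom,
    (eG.injective.comp hd).comp eQ.symm.injective⟩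

theorem abelian_quotient_minFaithfulDegree_le (G : Type*) [CommGroup G] [Finite G]
    (N : Subgroup G) :
    minFaithfulDegree (G ⧸ N) ≤ minFaithfulDegree G := by
  apply csInf_le_csInf (OrderBot.bddBelow _)
  · -- the defining set for `G` is nonempty (Cayley's theorem)
    have : Fintype G := Fintype.ofFinite _
    classical
    let e := Fintype.equivFin G
    let c : Equiv.Perm G →* Equiv.Perm (Fin (Fintype.card G)) :=
      { toFun := fun p => (e.symm.trans p).trans e
        map_one' := by ext x; simp
        map_mul' := fun p q => by ext x; simp }
    refine ⟨Fintype.card G, c.comp (MulAction.toPermHom G G), ?_⟩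
    have h1 : Function.Injective (MulAction.toPermHom G G) := by
      intro a b h
      simpa using DFunLike.congr_fun h (1 : G)
    have h2 : Function.Injective c := fun p q h => by
      ext x
      have := DFunLike.congr_fun h (e x)
      simpa [c] using this
    exact h2.comp h1
  · rintro n ⟨f, hf⟩
    obtain ⟨ι, hι⟩ := exists_injective_quotient_to_self G N
    exact ⟨f.comp ι, hf.comp hι⟩
end

section
/- If G is a finite group and N a normal subgroup such that G/N is cyclic, then μ(G/N) ≤ μ(G), where μ denotes the minimal faithful permutation degree. -/
theorem cyclic_quotient_minFaithfulDegree_le (G : Type*) [Group G] [Finite G]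
    (N : Subgroup G) [N.Normal] (h : IsCyclic (G ⧸ N)) :
    minFaithfulDegree (G ⧸ N) ≤ minFaithfulDegree G := by
  obtain ⟨y, hy⟩ := h.exists_ofOrder_eq_natCard
  obtain ⟨g, rfl⟩ := QuotientGroup.mk_surjective y
  have hdvd : orderOf ((g : G) : G ⧸ N) ∣ orderOf g := orderOf_map_dvd (QuotientGroup.mk' N) g
  have hg0 : orderOf g ≠ 0 := (orderOf_pos g).ne'
  set x := g ^ (orderOf g / orderOf ((g : G) : G ⧸ N)) with hx
  have hox : orderOf x = Nat.card (G ⧸ N) := by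
    rw [hx, orderOf_pow_orderOf_div hg0 hdvd, hy]
  have hcard : Nat.card (G ⧸ N) = Nat.card (Subgroup.zpowers x) := by
    rw [Nat.card_zpowers, hox]
  have : IsCyclic (Subgroup.zpowers x) := ⟨⟨⟨x, Subgroup.mem_zpowers x⟩, fun ⟨a, ha⟩ => by
    obtain ⟨k, hk⟩ := Subgroup.mem_zpowers_iff.mp ha
    exact ⟨k, Subtype.ext (by simp [← hk, Subgroup.coe_zpow])⟩⟩⟩
  have e : (G ⧸ N) ≃* Subgroup.zpowers x := mulEquivOfCyclicCardEq hcard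
  apply csInf_le_csInf (OrderBot.bddBelow _)
  · obtain ⟨m, ⟨em⟩⟩ := Finite.exists_equiv_fin G
    refine ⟨m, (Equiv.Perm.viaEmbeddingHom em.toEmbedding).comp (MulAction.toPermHom G G), ?_⟩
    exact (Equiv.Perm.viaEmbeddingHom_injective em.toEmbedding).comp MulAction.toPerm_injective
  · rintro n ⟨f, hf⟩
    refine ⟨(f.comp (Subgroup.zpowers x).subtype).comp e.toMonoidHom, ?_⟩
    exact hf.comp ((Subgroup.subtype_injective _).comp e.injective)
end

section
/- Let p be a prime and let Q be the group of order p^4 with presentation ⟨x,y,z | x^{p^2} = y^p = z^p = [x,y] = [x,z] = 1, [y,z] = x^p⟩. Then every subgroup H of Q not containing the central element x^p has order at most p, and consequently the minimal faithful permutation degree of Q is p^3. -/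
/-- The commutator `a⁻¹ * b⁻¹ * a * b`. -/
def pcomm {G : Type*} [Group G] (a b : G) : G := a⁻¹ * b⁻¹ * a * b

/-!
Write `t = x ^ p`. The generator `x` is central, and `t ≠ 1` since otherwise `Q` would be
abelian and generated by three elements of order dividing `p`. So `x` has order `p²`, and every
nontrivial subgroup of `⟨x⟩` contains `t`. A subgroup `H` avoiding `t` therefore meets `⟨x⟩`
trivially, so `|H|` divides `[Q : ⟨x⟩] = p²`; and if `|H| = p²`, the central subgroup `⟨x⟩` is a
complement of `H`, which puts every commutator, in particular `t = [y, z]`, into `H`.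

In a faithful action on `n` points some point is moved by `t`; its stabiliser avoids `t`, so
`p⁴ ≤ p · n`. Conversely `⟨z⟩` is core-free, as normality would put `[z, y] = t⁻¹` into `⟨z⟩`,
so `Q` acts faithfully on the `p³` cosets of `⟨z⟩`.
-/

open Subgroup

section Commutators

variable {G : Type*} [Group G]

theorem pcomm_eq_one_iff {a b : G} : pcomm a b = 1 ↔ Commute a b := by
  rw [pcomm, mul_assoc, mul_assoc, inv_mul_eq_one, eq_inv_mul_iff_mul_eq, commute_iff_eq, eq_comm]

theorem pcomm_inv (a b : G) : (pcomm a b)⁻¹ = pcomm b a := by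
  simp only [pcomm]
  group

theorem pcomm_mul_left_of_mem_center {a b c : G} (hc : c ∈ center G) :
    pcomm (a * c) b = pcomm a b := by
  have hc' := mem_center_iff.mp hc
  calc pcomm (a * c) b = c⁻¹ * (a⁻¹ * b⁻¹ * a * (c * b)) := by simp only [pcomm]; group
    _ = c⁻¹ * (pcomm a b * c) := by rw [← hc' b]; simp only [pcomm]; group
    _ = pcomm a b := by rw [hc']; group

theorem pcomm_mul_right_of_mem_center {a b c : G} (hc : c ∈ center G) :
    pcomm a (b * c) = pcomm a b := by
  rw [← pcomm_inv, pcomm_mul_left_of_mem_center hc, pcomm_inv]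

theorem Subgroup.IsComplement'.pcomm_mem {H K : Subgroup G} (h : IsComplement' H K)
    (hK : K ≤ center G) (a b : G) : pcomm a b ∈ H := by
  obtain ⟨⟨a', c⟩, rfl⟩ := h.2 a
  obtain ⟨⟨b', d⟩, rfl⟩ := h.2 b
  rw [pcomm_mul_left_of_mem_center (hK c.2), pcomm_mul_right_of_mem_center (hK d.2)]
  exact mul_mem (mul_mem (mul_mem (inv_mem a'.2) (inv_mem b'.2)) a'.2) b'.2

theorem mem_center_of_closure_eq_top {S : Set G} (hS : closure S = ⊤) {g : G}
    (hg : ∀ s ∈ S, Commute g s) : g ∈ center G := by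
  have : g ∈ centralizer (closure S : Set G) := by
    rw [centralizer_closure]
    exact fun s hs => (hg s hs).symm.eq
  rwa [hS, coe_top, centralizer_univ] at this

theorem isMulCommutative_of_closure_eq_top {S : Set G} (hS : closure S = ⊤)
    (h : ∀ a ∈ S, ∀ b ∈ S, Commute a b) : IsMulCommutative G :=
  center_eq_top_iff.mp <| top_le_iff.mp <|
    hS ▸ (closure_le _).mpr fun a ha => mem_center_of_closure_eq_top hS (h a ha)

end Commutators

section Subgroups

variable {G : Type*} [Group G]

theorem card_sup_le (H K : Subgroup G) [K.Normal] :
    Nat.card ↥(H ⊔ K) ≤ Nat.card H * Nat.card K := by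
  have := Set.natCard_mul_le (s := (H : Set G)) (t := K)
  rwa [← mul_normal] at this

theorem normal_of_le_center {H : Subgroup G} (hH : H ≤ center G) : H.Normal :=
  ⟨fun n hn g => by rw [mem_center_iff.mp (hH hn) g, mul_inv_cancel_right]; exact hn⟩

theorem index_eq_pow_of_card_eq_pow {H : Subgroup G} {p a b : ℕ} (hp : 0 < p)
    (hH : Nat.card H = p ^ a) (hG : Nat.card G = p ^ (a + b)) : H.index = p ^ b := by
  have := H.card_mul_index
  rw [hH, hG, pow_add] at this
  exact Nat.eq_of_mul_eq_mul_left (pow_pos hp a) this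

theorem mem_zpowers_zpow_of_not_dvd {p n : ℕ} (hp : p.Prime) {x : G} (hx : orderOf x = p ^ n)
    {m : ℤ} (hm : ¬ (p : ℤ) ∣ m) : x ∈ zpowers (x ^ m) := by
  have hpm : IsCoprime (p : ℤ) m :=
    (Prime.coprime_iff_not_dvd (Nat.prime_iff_prime_int.mp hp)).mpr hm
  rw [mem_zpowers_zpow_iff, hx, ← Int.isCoprime_iff_gcd_eq_one, Nat.cast_pow]
  exact hpm.symm.pow_right

theorem pow_prime_pow_mem_zpowers {p k : ℕ} (hp : p.Prime) {x g : G}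
    (hx : orderOf x = p ^ (k + 1)) (hg : g ∈ zpowers x) (hg1 : g ≠ 1) :
    x ^ p ^ k ∈ zpowers g := by
  induction k generalizing x g with
  | zero =>
    obtain ⟨m, rfl⟩ := mem_zpowers_iff.mp hg
    have hm : ¬ (p : ℤ) ∣ m := fun hm => hg1 (by
      rw [← orderOf_dvd_iff_zpow_eq_one, hx, pow_one]; exact hm)
    simpa using mem_zpowers_zpow_of_not_dvd hp hx hm
  | succ k ih =>
    obtain ⟨m, rfl⟩ := mem_zpowers_iff.mp hg
    by_cases hm : (p : ℤ) ∣ m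
    · obtain ⟨u, rfl⟩ := hm
      have hxp : orderOf (x ^ p) = p ^ (k + 1) := by
        rw [orderOf_pow_of_dvd hp.ne_zero (by rw [hx]; exact dvd_pow_self p (by omega)), hx,
          pow_succ', Nat.mul_div_cancel_left _ hp.pos]
      rw [zpow_mul, zpow_natCast] at hg1 ⊢
      rw [pow_succ', pow_mul]
      exact ih hxp (zpow_mem (mem_zpowers _) u) hg1
    · exact zpowers_le.mpr (mem_zpowers_zpow_of_not_dvd hp hx hm) (pow_mem (mem_zpowers x) _)

theorem mem_zpowers_of_orderOf_eq_prime {p : ℕ} (hp : p.Prime) {x g : G} (hx : orderOf x = p)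
    (hg : g ∈ zpowers x) (hg1 : g ≠ 1) : x ∈ zpowers g := by
  simpa using pow_prime_pow_mem_zpowers hp (k := 0) (by rwa [zero_add, pow_one]) hg hg1

theorem inf_zpowers_eq_bot {p k : ℕ} (hp : p.Prime) {x : G} (hx : orderOf x = p ^ (k + 1))
    {H : Subgroup G} (hH : x ^ p ^ k ∉ H) : H ⊓ zpowers x = ⊥ := by
  refine (eq_bot_iff_forall _).mpr fun g hg => ?_
  by_contra hg1
  exact hH (zpowers_le.mpr hg.1 (pow_prime_pow_mem_zpowers hp hx hg.2 hg1))

end Subgroups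

section MinFaithfulDegree

variable {G : Type*} [Group G]

theorem exists_injective_of_normalCore_eq_bot {S : Subgroup G} [S.FiniteIndex]
    (hS : S.normalCore = ⊥) : ∃ f : G →* Equiv.Perm (Fin S.index), Function.Injective f := by
  have e := Finite.equivFin (G ⧸ S)
  refine ⟨(Equiv.Perm.viaEmbeddingHom e.toEmbedding).comp (MulAction.toPermHom G (G ⧸ S)),
    (Equiv.Perm.viaEmbeddingHom_injective _).comp ?_⟩
  rwa [← MonoidHom.ker_eq_bot_iff, ← normalCore_eq_ker]

theorem minFaithfulDegree_le_index {S : Subgroup G} [S.FiniteIndex] (hS : S.normalCore = ⊥) :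
    minFaithfulDegree G ≤ S.index :=
  Nat.sInf_le (exists_injective_of_normalCore_eq_bot hS)

theorem card_le_mul_card_of_smul_ne {α : Type*} [MulAction G α] [Finite α] {t : G} {m : ℕ}
    (hm : ∀ H : Subgroup G, t ∉ H → Nat.card H ≤ m) {a : α} (ha : t • a ≠ a) :
    Nat.card G ≤ m * Nat.card α := by
  rw [← (MulAction.stabilizer G a).card_mul_index, MulAction.index_stabilizer]
  exact Nat.mul_le_mul (hm _ ha) (Set.ncard_le_card _)

theorem card_le_mul_minFaithfulDegree [Finite G] {t : G} (ht : t ≠ 1) {m : ℕ}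
    (hm : ∀ H : Subgroup G, t ∉ H → Nat.card H ≤ m) :
    Nat.card G ≤ m * minFaithfulDegree G := by
  obtain ⟨f, hf⟩ :
      minFaithfulDegree G ∈ {n | ∃ f : G →* Equiv.Perm (Fin n), Function.Injective f} :=
    Nat.sInf_mem ⟨_, exists_injective_of_normalCore_eq_bot (le_bot_iff.mp (normalCore_le ⊥))⟩
  let _ : MulAction G (Fin (minFaithfulDegree G)) := MulAction.compHom _ f
  obtain ⟨a, ha⟩ : ∃ a, f t a ≠ a := by
    by_contra! h
    exact ht (hf (by ext a; simp [h]))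
  simpa using card_le_mul_card_of_smul_ne hm (a := a) ha

end MinFaithfulDegree

section Presentation

variable {G : Type*} [Group G] {p : ℕ} {x y z : G}

theorem pow_ne_one_of_card_eq_pow_four (hp : p.Prime) (hgen : closure {x, y, z} = ⊤)
    (hcard : Nat.card G = p ^ 4) (hy : y ^ p = 1) (hz : z ^ p = 1) (hxy : pcomm x y = 1)
    (hxz : pcomm x z = 1) (hyz : pcomm y z = x ^ p) : x ^ p ≠ 1 := by
  intro hx
  have hxy' := pcomm_eq_one_iff.mp hxy
  have hxz' := pcomm_eq_one_iff.mp hxz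
  have hyz' := pcomm_eq_one_iff.mp (hyz.trans hx)
  have : IsMulCommutative G := isMulCommutative_of_closure_eq_top hgen <| by
    rintro _ (rfl | rfl | rfl) _ (rfl | rfl | rfl)
    exacts [.refl _, hxy', hxz', hxy'.symm, .refl _, hyz', hxz'.symm, hyz'.symm, .refl _]
  have hle : ∀ g : G, g ^ p = 1 → Nat.card (zpowers g) ≤ p := fun g hg =>
    Nat.card_zpowers g ▸ orderOf_le_of_pow_eq_one hp.pos hg
  have : p ^ 4 ≤ p ^ 3 :=
    calc p ^ 4 = Nat.card ↥(zpowers x ⊔ (zpowers y ⊔ zpowers z)) := by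
          rw [← hcard, ← card_top (G := G), ← hgen]
          simp only [Set.insert_eq, Subgroup.closure_union, zpowers_eq_closure]
      _ ≤ p * (p * p) := (card_sup_le _ _).trans <|
          Nat.mul_le_mul (hle x hx) <|
            (card_sup_le _ _).trans (Nat.mul_le_mul (hle y hy) (hle z hz))
      _ = p ^ 3 := by ring
  exact (Nat.pow_lt_pow_right hp.one_lt (by norm_num)).not_ge this

theorem card_le_of_pow_notMem [Finite G] (hp : p.Prime) (hcard : Nat.card G = p ^ 4)
    (hxc : x ∈ center G) (hx : x ^ p ^ 2 = 1) (hyz : pcomm y z = x ^ p) {H : Subgroup G}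
    (hH : x ^ p ∉ H) : Nat.card H ≤ p := by
  have : Fact p.Prime := ⟨hp⟩
  have hord : orderOf x = p ^ (1 + 1) :=
    orderOf_eq_prime_pow (by rw [pow_one]; exact fun h => hH (h ▸ H.one_mem)) hx
  have hZ : zpowers x ≤ center G := zpowers_le.mpr hxc
  have : (zpowers x).Normal := normal_of_le_center hZ
  have hdisj : H ⊓ zpowers x = ⊥ := inf_zpowers_eq_bot hp hord (by rwa [pow_one])
  have hdvd := relIndex_dvd_index_of_normal (H := zpowers x) (K := H)
  rw [← inf_relIndex_left, hdisj, relIndex_bot_left,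
    index_eq_pow_of_card_eq_pow (b := 2) hp.pos (by rw [Nat.card_zpowers, hord]) hcard] at hdvd
  obtain ⟨k, hk, hHk⟩ := (Nat.dvd_prime_pow hp).mp hdvd
  rcases Nat.lt_or_ge k 2 with hk2 | hk2
  · rw [hHk]
    exact (Nat.pow_le_pow_right hp.pos (by omega)).trans_eq (pow_one p)
  · have hcompl : IsComplement' H (zpowers x) := isComplement'_of_card_mul_and_disjoint
      (by rw [hHk, Nat.card_zpowers, hord, hcard, le_antisymm hk hk2]; ring)
      (disjoint_iff.mpr hdisj)
    exact absurd (hyz ▸ hcompl.pcomm_mem hZ y z) hH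

theorem normalCore_zpowers_eq_bot (hp : p.Prime) {c : G} (hc : c ∈ center G) (hc1 : c ≠ 1)
    (hz : orderOf z = p) (hyz : pcomm y z = c) : (zpowers z).normalCore = ⊥ := by
  have hcz : c ∉ zpowers z := fun hcz => hc1 <| by
    have hzc : z ∈ center G := zpowers_le.mpr hc (mem_zpowers_of_orderOf_eq_prime hp hz hcz hc1)
    rw [← hyz, pcomm_eq_one_iff]
    exact mem_center_iff.mp hzc y
  refine (eq_bot_iff_forall _).mpr fun g hg => ?_
  by_contra hg1
  have hzN : z ∈ (zpowers z).normalCore := zpowers_le.mpr hg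
    (mem_zpowers_of_orderOf_eq_prime hp hz (normalCore_le _ hg) hg1)
  have hcN : z⁻¹ * (y⁻¹ * z * y) ∈ (zpowers z).normalCore :=
    mul_mem (inv_mem hzN) ((normalCore_normal _).conj_mem' z hzN y)
  have hcomm : z⁻¹ * (y⁻¹ * z * y) = c⁻¹ := by
    rw [← hyz, pcomm_inv, pcomm]
    group
  rw [hcomm] at hcN
  exact hcz (inv_mem_iff.mp (normalCore_le _ hcN))

end Presentation

theorem Qp_subgroups_and_degree (p : ℕ) (hp : p.Prime)
    (Q : Type*) [Group Q] [Finite Q] (x y z : Q)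
    (hgen : Subgroup.closure {x, y, z} = ⊤) (hcard : Nat.card Q = p ^ 4)
    (hx : x ^ p ^ 2 = 1) (hy : y ^ p = 1) (hz : z ^ p = 1)
    (hxy : pcomm x y = 1) (hxz : pcomm x z = 1) (hyz : pcomm y z = x ^ p) :
    (∀ H : Subgroup Q, x ^ p ∉ H → Nat.card H ≤ p) ∧
    minFaithfulDegree Q = p ^ 3 := by
  have hxc : x ∈ center Q := mem_center_of_closure_eq_top hgen <| by
    rintro _ (rfl | rfl | rfl)
    exacts [Commute.refl _, pcomm_eq_one_iff.mp hxy, pcomm_eq_one_iff.mp hxz]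
  have ht : x ^ p ≠ 1 := pow_ne_one_of_card_eq_pow_four hp hgen hcard hy hz hxy hxz hyz
  have hsub : ∀ H : Subgroup Q, x ^ p ∉ H → Nat.card H ≤ p :=
    fun H hH => card_le_of_pow_notMem hp hcard hxc hx hyz hH
  have : Fact p.Prime := ⟨hp⟩
  have hzord : orderOf z = p := orderOf_eq_prime hz fun h => ht (by rw [← hyz, h, pcomm]; group)
  refine ⟨hsub, le_antisymm ?_ ?_⟩
  · calc minFaithfulDegree Q
        ≤ (zpowers z).index := minFaithfulDegree_le_index
          (normalCore_zpowers_eq_bot hp (pow_mem hxc p) ht hzord hyz)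
      _ = p ^ 3 := index_eq_pow_of_card_eq_pow (a := 1) hp.pos
          (by rw [Nat.card_zpowers, hzord, pow_one]) hcard
  · have hdeg := card_le_mul_minFaithfulDegree ht hsub
    rw [hcard, pow_succ'] at hdeg
    exact Nat.le_of_mul_le_mul_left hdeg hp.pos
end
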